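/- arXiv:2405.05160 — 2 statements merged into one kernel-verified Lean document; each statement's English description precedes it below -/
import Mathlib

section
/- For strictly decreasing logits z₁ > z₂ > ⋯ > z_K, the log of the maximum softmax response satisfies log SR_max(λz) = −log ∑ⱼ exp(λ(zⱼ − z₁)), and as λ → ∞ this is asymptotically equivalent to −exp(λ(z₂ − z₁)), i.e., the ratio log SR_max(λz) / (−exp(λ(z₂ − z₁))) tends to 1. -/
/-!
Dividing numerator and denominator by `exp (λ z₀)` gives `SR_max(λz) = 1 / (1 + T(λ))` with
`T(λ) = ∑_{j ≥ 1} exp (λ (zⱼ - z₀))`. As `λ → ∞` the tail `T` is dominated by its largest term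
`exp (λ (z₁ - z₀))`, which tends to `0`, and `log (1 + T) ∼ T` because `log` has derivative `1`
at `1`.
-/

open Real Filter Asymptotics Finset Topology

theorem Real.log_exp_div_sum_exp {ι : Type*} (s : Finset ι) (f : ι → ℝ) (a : ℝ) :
    log (exp a / ∑ j ∈ s, exp (f j)) = -log (∑ j ∈ s, exp (f j - a)) := by
  have hsum : ∑ j ∈ s, exp (f j - a) = (∑ j ∈ s, exp (f j)) / exp a := by
    simp only [exp_sub, Finset.sum_div]
  rw [hsum, ← inv_div, log_inv]

theorem Real.isEquivalent_log_one_add {α : Type*} {l : Filter α} {u : α → ℝ}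
    (hu : Tendsto u l (𝓝 0)) : (fun x => log (1 + u x)) ~[l] u := by
  have hlog : (fun h => log (1 + h) - log 1 - h • (1 : ℝ)) =o[𝓝 0] fun h => h :=
    hasDerivAt_iff_isLittleO_nhds_zero.1 (by simpa using hasDerivAt_log one_ne_zero)
  have h := hlog.comp_tendsto hu
  simp only [Function.comp_def, log_one, smul_eq_mul, mul_one, sub_zero] at h
  exact h

theorem isEquivalent_sum_exp_mul_atTop {ι : Type*} {s : Finset ι} {c : ι → ℝ} {i : ι}
    (hi : i ∈ s) (hc : ∀ j ∈ s, j ≠ i → c j < c i) :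
    (fun t => ∑ j ∈ s, exp (t * c j)) ~[atTop] fun t => exp (t * c i) := by
  classical
  have hrest : (fun t => ∑ j ∈ s.erase i, exp (t * c j)) =o[atTop] fun t => exp (t * c i) := by
    refine IsLittleO.fun_sum fun j hj => isLittleO_exp_comp_exp_comp.2 ?_
    have hgap : 0 < c i - c j := sub_pos.2 (hc j (mem_of_mem_erase hj) (ne_of_mem_erase hj))
    simpa only [id, ← mul_sub] using tendsto_id.atTop_mul_const hgap
  simpa only [← add_sum_erase s _ hi, Pi.add_def] using IsEquivalent.refl.add_isLittleO hrest

/-- For strictly decreasing logits, `log SR_max(λz) = -log ∑ⱼ exp (λ (zⱼ - z₀))`,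
and `log SR_max(λz) ∼ -exp (λ (z₁ - z₀))` as `λ → ∞`. -/
theorem log_srmax_asymptotic {K : ℕ} (z : Fin (K + 2) → ℝ) (hz : StrictAnti z) :
    (∀ lam : ℝ,
      Real.log (Real.exp (lam * z 0) / ∑ j, Real.exp (lam * z j))
        = -Real.log (∑ j, Real.exp (lam * (z j - z 0)))) ∧
    Filter.Tendsto (fun lam : ℝ =>
        Real.log (Real.exp (lam * z 0) / ∑ j, Real.exp (lam * z j))
          / (-Real.exp (lam * (z 1 - z 0))))
      Filter.atTop (nhds 1) := by
  have hlog_eq : ∀ lam : ℝ, log (exp (lam * z 0) / ∑ j, exp (lam * z j))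
      = -log (∑ j, exp (lam * (z j - z 0))) := fun lam => by
    simpa only [mul_sub] using log_exp_div_sum_exp univ (fun j => lam * z j) (lam * z 0)
  refine ⟨hlog_eq, ?_⟩
  set T : ℝ → ℝ := fun lam => ∑ j : Fin (K + 1), exp (lam * (z j.succ - z 0))
  have hT : T ~[atTop] fun lam => exp (lam * (z 1 - z 0)) :=
    isEquivalent_sum_exp_mul_atTop (mem_univ 0) fun j _ hj =>
      sub_lt_sub_right (hz (Fin.succ_lt_succ_iff.2 (Fin.pos_iff_ne_zero.2 hj))) _
  have hT_zero : Tendsto T atTop (𝓝 0) :=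
    hT.symm.tendsto_nhds <| tendsto_exp_atBot.comp <|
      tendsto_id.atTop_mul_const_of_neg (sub_neg.2 (hz Fin.zero_lt_one))
  have hsplit : ∀ lam, ∑ j, exp (lam * (z j - z 0)) = 1 + T lam := fun lam => by
    simp [T, Fin.sum_univ_succ]
  have hequiv : (fun lam => log (exp (lam * z 0) / ∑ j, exp (lam * z j)))
      ~[atTop] fun lam => -exp (lam * (z 1 - z 0)) := by
    simpa only [hlog_eq, hsplit] using ((isEquivalent_log_one_add hT_zero).trans hT).neg
  exact (isEquivalent_iff_tendsto_one (.of_forall fun _ => neg_ne_zero.2 (exp_ne_zero _))).1 hequiv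
end

section
/- For two scalar logit gaps: if the top-two softmax probabilities dominate, the asymptotic orderings agree. Precisely: for two logit vectors z, w ∈ ℝ^K each with strictly decreasing entries, if z⁽¹⁾ − z⁽²⁾ > w⁽¹⁾ − w⁽²⁾ then there exists Λ > 0 such that for all λ > Λ, SR_max(λz) > SR_max(λw). That is, for large enough scale, the SR_max ordering of any two samples is determined by their confidence margins. -/
/-!
Dividing numerator and denominator by `exp (λ v₀)` writes `SR_max(λv)` as `1 / (1 + T_v(λ))` with
`T_v(λ) = expTail v λ = ∑_{j ≥ 1} exp (-λ (v₀ - vⱼ))`. Because `z` is decreasing, `T_z(λ) ≤ (K + 1) exp (-λ (z₀ - z₁))`,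
while `T_w(λ) ≥ exp (-λ (w₀ - w₁))`; the larger margin of `z` makes the first bound smaller than the second
as soon as `exp (λ ((z₀ - z₁) - (w₀ - w₁))) > K + 1`.
-/

open Real Filter Finset

noncomputable section

def expTail {n : ℕ} (v : Fin (n + 1) → ℝ) (lam : ℝ) : ℝ :=
  ∑ j : Fin n, exp (lam * (v j.succ - v 0))

lemma expTail_nonneg {n : ℕ} (v : Fin (n + 1) → ℝ) (lam : ℝ) : 0 ≤ expTail v lam :=
  sum_nonneg fun _ _ => (exp_pos _).le

lemma exp_div_sum_exp_eq_inv_one_add_expTail {n : ℕ} (v : Fin (n + 1) → ℝ) (lam : ℝ) :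
    exp (lam * v 0) / ∑ j, exp (lam * v j) = (1 + expTail v lam)⁻¹ := by
  have hsplit : ∀ j : Fin n, exp (lam * v j.succ) = exp (lam * v 0) * exp (lam * (v j.succ - v 0)) :=
    fun j => by rw [← exp_add]; ring_nf
  rw [Fin.sum_univ_succ, sum_congr rfl fun j _ => hsplit j, ← mul_sum, ← mul_one_add, expTail,
    div_mul_cancel_left₀ (exp_pos _).ne']

lemma exp_le_expTail {n : ℕ} (v : Fin (n + 2) → ℝ) (lam : ℝ) :
    exp (lam * (v 1 - v 0)) ≤ expTail v lam :=
  single_le_sum (f := fun j : Fin (n + 1) => exp (lam * (v j.succ - v 0)))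
    (fun _ _ => (exp_pos _).le) (mem_univ 0)

lemma expTail_le_of_antitone {n : ℕ} {v : Fin (n + 2) → ℝ} (hv : Antitone v) {lam : ℝ}
    (hlam : 0 ≤ lam) : expTail v lam ≤ (n + 1) * exp (lam * (v 1 - v 0)) := by
  have hterm : ∀ j : Fin (n + 1), exp (lam * (v j.succ - v 0)) ≤ exp (lam * (v 1 - v 0)) :=
    fun j => exp_le_exp.2 <| mul_le_mul_of_nonneg_left
      (sub_le_sub_right (hv (Fin.one_le_of_ne_zero (Fin.succ_ne_zero j))) _) hlam
  simpa [expTail] using sum_le_card_nsmul univ _ _ fun j _ => hterm j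

lemma eventually_expTail_lt_of_margin_lt {n : ℕ} {z w : Fin (n + 2) → ℝ} (hz : Antitone z)
    (h : w 0 - w 1 < z 0 - z 1) : ∀ᶠ lam in atTop, expTail z lam < expTail w lam := by
  have hgrow : Tendsto (fun lam => exp (lam * ((z 0 - z 1) - (w 0 - w 1)))) atTop atTop :=
    tendsto_exp_atTop.comp (tendsto_id.atTop_mul_const (sub_pos.2 h))
  filter_upwards [eventually_ge_atTop 0, hgrow.eventually_gt_atTop ((n : ℝ) + 1)]
    with lam hlam hexp
  calc expTail z lam ≤ (n + 1) * exp (lam * (z 1 - z 0)) := expTail_le_of_antitone hz hlam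
    _ < exp (lam * ((z 0 - z 1) - (w 0 - w 1))) * exp (lam * (z 1 - z 0)) :=
        mul_lt_mul_of_pos_right hexp (exp_pos _)
    _ = exp (lam * (w 1 - w 0)) := by rw [← exp_add]; ring_nf
    _ ≤ expTail w lam := exp_le_expTail w lam

end

theorem srmax_ordering_by_margin_general {K : ℕ} (z w : Fin (K + 2) → ℝ)
    (hz : StrictAnti z)
    (h : w 0 - w 1 < z 0 - z 1) :
    ∃ Λ : ℝ, 0 < Λ ∧ ∀ lam : ℝ, Λ < lam →
      Real.exp (lam * w 0) / (∑ j, Real.exp (lam * w j))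
        < Real.exp (lam * z 0) / ∑ j, Real.exp (lam * z j) := by
  obtain ⟨Λ, hΛ⟩ := (eventually_expTail_lt_of_margin_lt hz.antitone h).exists_forall_of_atTop
  refine ⟨max Λ 1, lt_max_of_lt_right one_pos, fun lam hlam => ?_⟩
  rw [exp_div_sum_exp_eq_inv_one_add_expTail, exp_div_sum_exp_eq_inv_one_add_expTail,
    inv_lt_inv₀ (by linarith [expTail_nonneg w lam]) (by linarith [expTail_nonneg z lam])]
  linarith [hΛ lam (le_of_max_le_left hlam.le)]

/-- For large enough scale, the `SR_max` ordering of two strictly-decreasing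
logit vectors is determined by their confidence margins. -/
theorem srmax_ordering_by_margin {K : ℕ} (z w : Fin (K + 2) → ℝ)
    (hz : StrictAnti z) (hw : StrictAnti w)
    (h : w 0 - w 1 < z 0 - z 1) :
    ∃ Λ : ℝ, 0 < Λ ∧ ∀ lam : ℝ, Λ < lam →
      Real.exp (lam * w 0) / (∑ j, Real.exp (lam * w j))
        < Real.exp (lam * z 0) / ∑ j, Real.exp (lam * z j) :=
  srmax_ordering_by_margin_general z w hz h
end
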